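/- arXiv:2102.06661 — 3 statements merged into one kernel-verified Lean document; each statement's English description precedes it below -/
import Mathlib

section
/- Let γ > 1 and let q_l = (ρ_l, ρ_l u_l, ρ_l v_l, E_l) and q_r = (ρ_r, ρ_r u_r, ρ_r v_r, E_r) be states with ρ_l > 0 and ρ_r > 0, and let H_s = (E_s + p(q_s))/ρ_s for s ∈ {l, r}. Define the Roe averages ρ̃ = √(ρ_l ρ_r), ũ = (√ρ_l·u_l + √ρ_r·u_r)/(√ρ_l + √ρ_r), ṽ = (√ρ_l·v_l + √ρ_r·v_r)/(√ρ_l + √ρ_r), H̃ = (√ρ_l·H_l + √ρ_r·H_r)/(√ρ_l + √ρ_r), and the Roe state q̃ = (ρ̃, ρ̃ũ, ρ̃ṽ, Ẽ) with Ẽ = ρ̃(2H̃ + (γ − 1)(ũ² + ṽ²))/(2γ). Then the Roe property holds: f(q_r) − f(q_l) = A(q̃)·(q_r − q_l), where A(q̃) is the Jacobian matrix of the 2D Euler x-flux f at q̃. -/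
open Matrix

/-- Ideal-gas pressure `p(q) = (γ-1)(E - (m² + n²)/(2ρ))` in conserved
variables `q = (ρ, m, n, E)`. -/
noncomputable def pres (γ : ℝ) (q : Fin 4 → ℝ) : ℝ :=
  (γ - 1) * (q 3 - (q 1 ^ 2 + q 2 ^ 2) / (2 * q 0))

/-- The x-direction flux of the 2D compressible Euler equations. -/
noncomputable def flux (γ : ℝ) (q : Fin 4 → ℝ) : Fin 4 → ℝ :=
  ![q 1,
    q 1 ^ 2 / q 0 + pres γ q,
    q 1 * q 2 / q 0,
    (q 3 + pres γ q) * q 1 / q 0]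

/-- The Jacobian matrix `A(q)` of the flux: the matrix of the partial
derivatives of `flux γ` at `q`. -/
noncomputable def jac (γ : ℝ) (q : Fin 4 → ℝ) : Matrix (Fin 4) (Fin 4) ℝ :=
  Matrix.of fun i j => fderiv ℝ (flux γ) q (Pi.single j 1) i

/-! Along any direction `w` the flux has line derivative `eulerJacobian γ u v H *ᵥ w`, the
classical form of `A(q)` in the velocity `(u, v)` and total enthalpy `H`; since the flux is
differentiable for `ρ ≠ 0`, this identifies the Jacobian. Parametrising states by
`(ρ, u, v, H)` and writing `ρ_l = s²`, `ρ_r = t²`, both jumps are quadratic in Roe's parameter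
vector `√ρ (1, u, v, H)`, and the Roe property becomes a rational identity in `s`, `t` and the
primitive variables of the two states. -/

noncomputable def eulerJacobian (γ u v H : ℝ) : Matrix (Fin 4) (Fin 4) ℝ :=
  !![0, 1, 0, 0;
    (γ - 1) / 2 * (u ^ 2 + v ^ 2) - u ^ 2, (3 - γ) * u, (1 - γ) * v, γ - 1;
    -(u * v), v, u, 0;
    u * ((γ - 1) / 2 * (u ^ 2 + v ^ 2) - H), H - (γ - 1) * u ^ 2, (1 - γ) * u * v, γ * u]

theorem differentiableAt_flux {γ : ℝ} {q : Fin 4 → ℝ} (hq : q 0 ≠ 0) :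
    DifferentiableAt ℝ (flux γ) q := by
  rw [differentiableAt_pi]
  intro i
  fin_cases i <;>
    simp only [flux, pres, Fin.isValue, Fin.zero_eta, Fin.mk_one, Fin.reduceFinMk, cons_val_zero,
      cons_val_one, cons_val] <;>
    fun_prop (disch := simpa)

theorem hasLineDerivAt_apply {n : ℕ} (q w : Fin n → ℝ) (k : Fin n) :
    HasLineDerivAt ℝ (fun x => x k) (w k) q w := by
  simpa [HasLineDerivAt] using ((hasDerivAt_id (0 : ℝ)).mul_const (w k)).const_add (q k)

theorem hasLineDerivAt_pres {γ : ℝ} {q : Fin 4 → ℝ} (hq : q 0 ≠ 0) (w : Fin 4 → ℝ) :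
    HasLineDerivAt ℝ (pres γ) ((γ - 1) * (w 3 - (q 1 * w 1 + q 2 * w 2) / q 0
      + (q 1 ^ 2 + q 2 ^ 2) / (2 * q 0 ^ 2) * w 0)) q w := by
  have hx := hasLineDerivAt_apply q w
  refine (((hx 3).fun_sub ((((hx 1).fun_pow 2).fun_add ((hx 2).fun_pow 2)).fun_div
    ((hx 0).const_mul 2) (by simpa using hq))).const_mul (γ - 1)).congr_deriv ?_
  congr 1
  simp only [Fin.isValue, Nat.cast_ofNat, zero_smul, Pi.add_apply, Pi.zero_apply, add_zero,
    Nat.add_one_sub_one, pow_one]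
  field_simp
  ring

theorem hasLineDerivAt_flux {γ : ℝ} {q : Fin 4 → ℝ} (hq : q 0 ≠ 0) (w : Fin 4 → ℝ) :
    HasLineDerivAt ℝ (flux γ)
      (eulerJacobian γ (q 1 / q 0) (q 2 / q 0) ((q 3 + pres γ q) / q 0) *ᵥ w) q w := by
  have hx := hasLineDerivAt_apply q w
  have hx0 : (q + (0 : ℝ) • w) 0 ≠ 0 := by simpa using hq
  have hp := hasLineDerivAt_pres (γ := γ) hq w
  rw [HasLineDerivAt, hasDerivAt_pi]
  intro i
  fin_cases i
  · refine (hx 1).congr_deriv ?_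
    simp [eulerJacobian, mulVec, dotProduct, Fin.sum_univ_four]
  · refine ((((hx 1).fun_pow 2).fun_div (hx 0) hx0).fun_add hp).congr_deriv ?_
    simp only [eulerJacobian, pres, mulVec, dotProduct, Fin.sum_univ_four, of_apply, cons_val',
      cons_val_fin_one, cons_val, cons_val_one, cons_val_zero, Fin.isValue, Fin.mk_one, zero_smul,
      Pi.add_apply, Pi.zero_apply, add_zero, Nat.cast_ofNat, Nat.add_one_sub_one, pow_one]
    field_simp
    ring
  · refine (((hx 1).fun_mul (hx 2)).fun_div (hx 0) hx0).congr_deriv ?_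
    simp only [eulerJacobian, mulVec, dotProduct, Fin.sum_univ_four, of_apply, cons_val',
      cons_val_fin_one, cons_val, cons_val_one, cons_val_zero, Fin.isValue, Fin.reduceFinMk,
      zero_smul, Pi.add_apply, Pi.zero_apply, add_zero]
    field_simp
    ring
  · refine ((((hx 3).fun_add hp).fun_mul (hx 1)).fun_div (hx 0) hx0).congr_deriv ?_
    simp only [eulerJacobian, pres, mulVec, dotProduct, Fin.sum_univ_four, of_apply, cons_val',
      cons_val_fin_one, cons_val, cons_val_one, cons_val_zero, Fin.isValue, Fin.reduceFinMk,
      zero_smul, Pi.add_apply, Pi.zero_apply, add_zero]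
    field_simp
    ring

theorem jac_eq_eulerJacobian {γ : ℝ} {q : Fin 4 → ℝ} (hq : q 0 ≠ 0) :
    jac γ q = eulerJacobian γ (q 1 / q 0) (q 2 / q 0) ((q 3 + pres γ q) / q 0) := by
  ext i j
  have h := ((differentiableAt_flux hq).hasFDerivAt.hasLineDerivAt (Pi.single j 1)).unique
    (hasLineDerivAt_flux (γ := γ) hq (Pi.single j 1))
  simp [jac, h]

noncomputable def stateOfEnthalpy (γ ρ u v H : ℝ) : Fin 4 → ℝ :=
  ![ρ, ρ * u, ρ * v, ρ * (2 * H + (γ - 1) * (u ^ 2 + v ^ 2)) / (2 * γ)]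

theorem pres_stateOfEnthalpy {γ ρ : ℝ} (hγ : γ ≠ 0) (hρ : ρ ≠ 0) (u v H : ℝ) :
    pres γ (stateOfEnthalpy γ ρ u v H) = (γ - 1) * ρ * (2 * H - (u ^ 2 + v ^ 2)) / (2 * γ) := by
  simp only [pres, stateOfEnthalpy, Fin.isValue, cons_val, cons_val_one, cons_val_zero]
  field_simp
  ring

theorem eq_stateOfEnthalpy {γ ρ : ℝ} (hγ : γ ≠ 0) (hρ : ρ ≠ 0) (u v E : ℝ) :
    ![ρ, ρ * u, ρ * v, E] = stateOfEnthalpy γ ρ u v ((E + pres γ ![ρ, ρ * u, ρ * v, E]) / ρ) := by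
  ext i
  fin_cases i <;>
    simp only [stateOfEnthalpy, pres, Fin.isValue, Fin.zero_eta, Fin.mk_one, Fin.reduceFinMk,
      cons_val, cons_val_one, cons_val_zero]
  field_simp
  ring

theorem jac_stateOfEnthalpy {γ ρ : ℝ} (hγ : γ ≠ 0) (hρ : ρ ≠ 0) (u v H : ℝ) :
    jac γ (stateOfEnthalpy γ ρ u v H) = eulerJacobian γ u v H := by
  have hH : (stateOfEnthalpy γ ρ u v H 3 + pres γ (stateOfEnthalpy γ ρ u v H)) /
      stateOfEnthalpy γ ρ u v H 0 = H := by
    rw [pres_stateOfEnthalpy hγ hρ]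
    simp only [stateOfEnthalpy, Fin.isValue, cons_val, cons_val_zero]
    field_simp
    ring
  rw [jac_eq_eulerJacobian (by simpa [stateOfEnthalpy] using hρ), hH]
  simp [stateOfEnthalpy, hρ]

theorem flux_stateOfEnthalpy {γ ρ : ℝ} (hγ : γ ≠ 0) (hρ : ρ ≠ 0) (u v H : ℝ) :
    flux γ (stateOfEnthalpy γ ρ u v H) =
      ![ρ * u, ρ * u ^ 2 + (γ - 1) * ρ * (2 * H - (u ^ 2 + v ^ 2)) / (2 * γ), ρ * u * v,
        ρ * H * u] := by
  rw [flux, pres_stateOfEnthalpy hγ hρ]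
  ext i
  fin_cases i <;>
    simp only [stateOfEnthalpy, Fin.isValue, Fin.zero_eta, Fin.mk_one, Fin.reduceFinMk, cons_val,
      cons_val_one, cons_val_zero] <;>
    field_simp
  ring

noncomputable def roeAverage (s t a b : ℝ) : ℝ := (s * a + t * b) / (s + t)

theorem flux_sub_flux_eq_eulerJacobian_roeAverage_mulVec {γ s t : ℝ} (hγ : γ ≠ 0) (hs : s ≠ 0)
    (ht : t ≠ 0) (hst : s + t ≠ 0) (ul vl Hl ur vr Hr : ℝ) :
    flux γ (stateOfEnthalpy γ (t ^ 2) ur vr Hr) - flux γ (stateOfEnthalpy γ (s ^ 2) ul vl Hl) =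
      eulerJacobian γ (roeAverage s t ul ur) (roeAverage s t vl vr) (roeAverage s t Hl Hr) *ᵥ
        (stateOfEnthalpy γ (t ^ 2) ur vr Hr - stateOfEnthalpy γ (s ^ 2) ul vl Hl) := by
  rw [flux_stateOfEnthalpy hγ (pow_ne_zero 2 ht), flux_stateOfEnthalpy hγ (pow_ne_zero 2 hs)]
  ext i
  fin_cases i <;>
    simp only [Pi.sub_apply, mulVec, dotProduct, Fin.sum_univ_four, eulerJacobian, roeAverage,
      stateOfEnthalpy, of_apply, cons_val', cons_val_fin_one, cons_val, cons_val_zero, cons_val_one,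
      Fin.isValue, Fin.zero_eta, Fin.mk_one, Fin.reduceFinMk] <;>
    field_simp <;>
    ring

theorem stmt4 (γ : ℝ) (hγ : 1 < γ)
    (ρl ul vl El ρr ur vr Er : ℝ) (hρl : 0 < ρl) (hρr : 0 < ρr)
    (ql qr : Fin 4 → ℝ)
    (hql : ql = ![ρl, ρl * ul, ρl * vl, El])
    (hqr : qr = ![ρr, ρr * ur, ρr * vr, Er])
    (Hl Hr : ℝ)
    (hHl : Hl = (El + pres γ ql) / ρl)
    (hHr : Hr = (Er + pres γ qr) / ρr)
    (ρt ut vt Ht Et : ℝ)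
    (hρt : ρt = Real.sqrt (ρl * ρr))
    (hut : ut = (Real.sqrt ρl * ul + Real.sqrt ρr * ur) / (Real.sqrt ρl + Real.sqrt ρr))
    (hvt : vt = (Real.sqrt ρl * vl + Real.sqrt ρr * vr) / (Real.sqrt ρl + Real.sqrt ρr))
    (hHt : Ht = (Real.sqrt ρl * Hl + Real.sqrt ρr * Hr) / (Real.sqrt ρl + Real.sqrt ρr))
    (hEt : Et = ρt * (2 * Ht + (γ - 1) * (ut ^ 2 + vt ^ 2)) / (2 * γ))
    (qt : Fin 4 → ℝ) (hqt : qt = ![ρt, ρt * ut, ρt * vt, Et]) :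
    flux γ qr - flux γ ql = jac γ qt *ᵥ (qr - ql) := by
  have hγ0 : γ ≠ 0 := (zero_lt_one.trans hγ).ne'
  have hql' : ql = stateOfEnthalpy γ ρl ul vl Hl := by
    rw [hHl, hql]
    exact eq_stateOfEnthalpy hγ0 hρl.ne' ul vl El
  have hqr' : qr = stateOfEnthalpy γ ρr ur vr Hr := by
    rw [hHr, hqr]
    exact eq_stateOfEnthalpy hγ0 hρr.ne' ur vr Er
  have hqt' : qt = stateOfEnthalpy γ ρt ut vt Ht := by rw [hqt, hEt]; rfl
  obtain ⟨s, hs, rfl⟩ : ∃ s > 0, ρl = s ^ 2 :=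
    ⟨√ρl, Real.sqrt_pos.2 hρl, (Real.sq_sqrt hρl.le).symm⟩
  obtain ⟨t, ht, rfl⟩ : ∃ t > 0, ρr = t ^ 2 :=
    ⟨√ρr, Real.sqrt_pos.2 hρr, (Real.sq_sqrt hρr.le).symm⟩
  rw [Real.sqrt_sq hs.le, Real.sqrt_sq ht.le] at hut hvt hHt
  rw [← mul_pow, Real.sqrt_sq (by positivity)] at hρt
  subst hρt
  rw [hql', hqr', hqt', jac_stateOfEnthalpy hγ0 (by positivity), hut, hvt, hHt]
  exact flux_sub_flux_eq_eulerJacobian_roeAverage_mulVec hγ0 hs.ne' ht.ne' (by positivity) ..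
end

section
/- Let ρ_l, ρ_r > 0 and u_l, v_l, H_l, u_r, v_r, H_r ∈ ℝ, and define the √ρ-weighted Roe means ũ = (√ρ_l·u_l + √ρ_r·u_r)/(√ρ_l + √ρ_r), ṽ = (√ρ_l·v_l + √ρ_r·v_r)/(√ρ_l + √ρ_r), H̃ = (√ρ_l·H_l + √ρ_r·H_r)/(√ρ_l + √ρ_r). If H_l − (u_l² + v_l²)/2 > 0 and H_r − (u_r² + v_r²)/2 > 0, then H̃ − (ũ² + ṽ²)/2 > 0. In particular, for γ > 1 the Roe mean speed of sound c̃ = √((γ − 1)(H̃ − (ũ² + ṽ²)/2)) is well defined and positive. -/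
/-! Roe's averages are convex combinations with weights `√ρₗ, √ρᵣ`. Averaging is linear, so the
mean of `H - (u² + v²)/2` equals `H̃ - (mean u² + mean v²)/2`; since a weighted mean of squares
dominates the square of the weighted mean, this is at most `H̃ - (ũ² + ṽ²)/2`. -/

noncomputable def weightedMean (a b x y : ℝ) : ℝ := (a * x + b * y) / (a + b)

lemma weightedMean_pos {a b x y : ℝ} (ha : 0 < a) (hb : 0 < b) (hx : 0 < x) (hy : 0 < y) :
    0 < weightedMean a b x y := by
  unfold weightedMean
  positivity

lemma weightedMean_sq_le {a b : ℝ} (ha : 0 ≤ a) (hb : 0 ≤ b) (x y : ℝ) :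
    weightedMean a b x y ^ 2 ≤ weightedMean a b (x ^ 2) (y ^ 2) := by
  unfold weightedMean
  rcases (add_nonneg ha hb).eq_or_lt with hab | hab
  · simp [← hab]
  rw [div_pow, div_le_div_iff₀ (by positivity) hab]
  -- `(a + b)(a x² + b y²) - (a x + b y)² = a b (x - y)²`
  nlinarith [mul_nonneg hab.le (mul_nonneg (mul_nonneg ha hb) (sq_nonneg (x - y)))]

lemma weightedMean_internal_le {a b : ℝ} (ha : 0 ≤ a) (hb : 0 ≤ b) (ul vl Hl ur vr Hr : ℝ) :
    weightedMean a b (Hl - (ul ^ 2 + vl ^ 2) / 2) (Hr - (ur ^ 2 + vr ^ 2) / 2) ≤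
      weightedMean a b Hl Hr - (weightedMean a b ul ur ^ 2 + weightedMean a b vl vr ^ 2) / 2 := by
  have hmean : weightedMean a b (Hl - (ul ^ 2 + vl ^ 2) / 2) (Hr - (ur ^ 2 + vr ^ 2) / 2) =
      weightedMean a b Hl Hr -
        (weightedMean a b (ul ^ 2) (ur ^ 2) + weightedMean a b (vl ^ 2) (vr ^ 2)) / 2 := by
    unfold weightedMean
    ring
  rw [hmean]
  linarith [weightedMean_sq_le ha hb ul ur, weightedMean_sq_le ha hb vl vr]

theorem stmt6 (ρl ρr ul vl Hl ur vr Hr ut vt Ht : ℝ)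
    (hρl : 0 < ρl) (hρr : 0 < ρr)
    (hut : ut = (Real.sqrt ρl * ul + Real.sqrt ρr * ur) / (Real.sqrt ρl + Real.sqrt ρr))
    (hvt : vt = (Real.sqrt ρl * vl + Real.sqrt ρr * vr) / (Real.sqrt ρl + Real.sqrt ρr))
    (hHt : Ht = (Real.sqrt ρl * Hl + Real.sqrt ρr * Hr) / (Real.sqrt ρl + Real.sqrt ρr))
    (hl : 0 < Hl - (ul ^ 2 + vl ^ 2) / 2)
    (hr : 0 < Hr - (ur ^ 2 + vr ^ 2) / 2) :
    0 < Ht - (ut ^ 2 + vt ^ 2) / 2 ∧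
    ∀ γ : ℝ, 1 < γ → 0 < Real.sqrt ((γ - 1) * (Ht - (ut ^ 2 + vt ^ 2) / 2)) := by
  have hal : 0 < Real.sqrt ρl := Real.sqrt_pos.mpr hρl
  have har : 0 < Real.sqrt ρr := Real.sqrt_pos.mpr hρr
  have hc : 0 < Ht - (ut ^ 2 + vt ^ 2) / 2 := by
    rw [hut, hvt, hHt]
    exact (weightedMean_pos hal har hl hr).trans_le
      (weightedMean_internal_le hal.le har.le ul vl Hl ur vr Hr)
  exact ⟨hc, fun γ hγ => Real.sqrt_pos.mpr (mul_pos (sub_pos.mpr hγ) hc)⟩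
end

section
/- Let γ > 1 and let q_l, q_r ∈ ℝ⁴ be states with ρ_l, ρ_r > 0 whose Roe averages ρ̃, ũ, ṽ, H̃ satisfy H̃ − (ũ² + ṽ²)/2 > 0, with c̃ = √((γ − 1)(H̃ − (ũ² + ṽ²)/2)). If the jump Δq = q_r − q_l lies in the span of the linear-wave eigenvectors r̃₂ = (1, ũ, ṽ, (ũ² + ṽ²)/2) and r̃₃ = (0, 0, 1, ṽ) at the Roe state (equivalently, if the acoustic wave strengths l̃₁·Δq and l̃₄·Δq both vanish), then the Rankine–Hugoniot residual vanishes: f(q_r) − f(q_l) = ũ·(q_r − q_l). -/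
open Matrix

/-!
The Roe average ũ of the velocities m/ρ linearizes the kinetic energy exactly:
Δ(m²/2ρ) = ũ Δm − ½ ũ² Δρ. Hence Δp = (γ−1)(ΔE − ũ Δm − ṽ Δn + ½(ũ² + ṽ²) Δρ), which vanishes
on the span of r̃₂ and r̃₃. The momentum component Δm = ũ Δρ of the span condition reduces to
√ρ_l √ρ_r (u_l − u_r) = 0, so both states move with velocity ũ. With a common velocity and no pressure
jump, each component of the flux jump is ũ times the jump of the corresponding conserved variable.
-/

noncomputable def roeAvg (ρl ρr wl wr : ℝ) : ℝ :=
  (Real.sqrt ρl * wl + Real.sqrt ρr * wr) / (Real.sqrt ρl + Real.sqrt ρr)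

theorem roeAvg_self {ρl ρr : ℝ} (hρl : 0 < ρl) (w : ℝ) : roeAvg ρl ρr w w = w := by
  have : 0 < Real.sqrt ρl + Real.sqrt ρr := by positivity
  rw [roeAvg, ← add_mul, mul_div_cancel_left₀ _ this.ne']

section RoeAverage

variable {ρl ρr : ℝ} (hρl : 0 < ρl) (hρr : 0 < ρr) (ml mr : ℝ)
include hρl hρr

theorem sub_kineticEnergy_eq_roeAvg :
    mr ^ 2 / (2 * ρr) - ml ^ 2 / (2 * ρl) =
      roeAvg ρl ρr (ml / ρl) (mr / ρr) * (mr - ml) -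
        roeAvg ρl ρr (ml / ρl) (mr / ρr) ^ 2 / 2 * (ρr - ρl) := by
  obtain ⟨sl, hsl, rfl⟩ : ∃ s, 0 < s ∧ s ^ 2 = ρl := ⟨_, Real.sqrt_pos.2 hρl, Real.sq_sqrt hρl.le⟩
  obtain ⟨sr, hsr, rfl⟩ : ∃ s, 0 < s ∧ s ^ 2 = ρr := ⟨_, Real.sqrt_pos.2 hρr, Real.sq_sqrt hρr.le⟩
  simp only [roeAvg, Real.sqrt_sq hsl.le, Real.sqrt_sq hsr.le]
  field_simp
  ring

theorem div_eq_div_of_sub_eq_roeAvg_mul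
    (h : mr - ml = roeAvg ρl ρr (ml / ρl) (mr / ρr) * (ρr - ρl)) : ml / ρl = mr / ρr := by
  obtain ⟨sl, hsl, rfl⟩ : ∃ s, 0 < s ∧ s ^ 2 = ρl := ⟨_, Real.sqrt_pos.2 hρl, Real.sq_sqrt hρl.le⟩
  obtain ⟨sr, hsr, rfl⟩ : ∃ s, 0 < s ∧ s ^ 2 = ρr := ⟨_, Real.sqrt_pos.2 hρr, Real.sq_sqrt hρr.le⟩
  simp only [roeAvg, Real.sqrt_sq hsl.le, Real.sqrt_sq hsr.le] at h
  field_simp at h ⊢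
  nlinarith [mul_pos hsl hsr]

end RoeAverage

theorem pres_sub_pres (γ : ℝ) {ql qr : Fin 4 → ℝ} (hρl : 0 < ql 0) (hρr : 0 < qr 0) :
    pres γ qr - pres γ ql =
      (γ - 1) * (qr 3 - ql 3 - roeAvg (ql 0) (qr 0) (ql 1 / ql 0) (qr 1 / qr 0) * (qr 1 - ql 1)
        - roeAvg (ql 0) (qr 0) (ql 2 / ql 0) (qr 2 / qr 0) * (qr 2 - ql 2)
        + (roeAvg (ql 0) (qr 0) (ql 1 / ql 0) (qr 1 / qr 0) ^ 2
          + roeAvg (ql 0) (qr 0) (ql 2 / ql 0) (qr 2 / qr 0) ^ 2) / 2 * (qr 0 - ql 0)) := by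
  have hu := sub_kineticEnergy_eq_roeAvg hρl hρr (ql 1) (qr 1)
  have hv := sub_kineticEnergy_eq_roeAvg hρl hρr (ql 2) (qr 2)
  simp only [pres, add_div]
  linear_combination (1 - γ) * (hu + hv)

theorem flux_sub_flux_of_div_eq (γ u : ℝ) {ql qr : Fin 4 → ℝ} (hρl : ql 0 ≠ 0) (hρr : qr 0 ≠ 0)
    (hul : ql 1 / ql 0 = u) (hur : qr 1 / qr 0 = u) (hp : pres γ qr = pres γ ql) :
    flux γ qr - flux γ ql = u • (qr - ql) := by
  rw [div_eq_iff hρl] at hul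
  rw [div_eq_iff hρr] at hur
  ext i
  fin_cases i <;> simp [flux, hp, hul, hur] <;> field_simp
  ring

theorem stmt8_general (γ : ℝ) (ql qr : Fin 4 → ℝ)
    (hρl : 0 < ql 0) (hρr : 0 < qr 0)
    (ut vt : ℝ)
    -- Roe averages: `√ρ`-weighted means of the velocities and total enthalpies
    (hut : ut = (Real.sqrt (ql 0) * (ql 1 / ql 0) + Real.sqrt (qr 0) * (qr 1 / qr 0)) /
      (Real.sqrt (ql 0) + Real.sqrt (qr 0)))
    (hvt : vt = (Real.sqrt (ql 0) * (ql 2 / ql 0) + Real.sqrt (qr 0) * (qr 2 / qr 0)) /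
      (Real.sqrt (ql 0) + Real.sqrt (qr 0)))
    -- the jump lies in the span of the linear-wave eigenvectors r̃₂, r̃₃
    (hspan : qr - ql ∈ Submodule.span ℝ
      ({![1, ut, vt, (ut ^ 2 + vt ^ 2) / 2], ![0, 0, 1, vt]} : Set (Fin 4 → ℝ))) :
    flux γ qr - flux γ ql = ut • (qr - ql) := by
  obtain ⟨a, b, hab⟩ := Submodule.mem_span_pair.mp hspan
  have hρ : qr 0 - ql 0 = a := by simpa using (congrFun hab 0).symm
  have hm : qr 1 - ql 1 = a * ut := by simpa using (congrFun hab 1).symm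
  have hn : qr 2 - ql 2 = a * vt + b := by simpa using (congrFun hab 2).symm
  have hE : qr 3 - ql 3 = a * ((ut ^ 2 + vt ^ 2) / 2) + b * vt := by
    simpa using (congrFun hab 3).symm
  have hvel : ql 1 / ql 0 = qr 1 / qr 0 :=
    div_eq_div_of_sub_eq_roeAvg_mul hρl hρr _ _ (by rw [roeAvg, ← hut, hm, hρ, mul_comm])
  have hul : ql 1 / ql 0 = ut := by rw [hut, ← hvel]; exact (roeAvg_self hρl _).symm
  have hp : pres γ qr = pres γ ql := by
    have := pres_sub_pres γ hρl hρr
    rw [roeAvg, ← hut, roeAvg, ← hvt] at this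
    linear_combination this + (γ - 1) * (hE - ut * hm - vt * hn + (ut ^ 2 + vt ^ 2) / 2 * hρ)
  exact flux_sub_flux_of_div_eq γ ut hρl.ne' hρr.ne' hul (hvel ▸ hul) hp

theorem stmt8 (γ : ℝ) (hγ : 1 < γ) (ql qr : Fin 4 → ℝ)
    (hρl : 0 < ql 0) (hρr : 0 < qr 0)
    (ut vt Ht : ℝ)
    -- Roe averages: `√ρ`-weighted means of the velocities and total enthalpies
    (hut : ut = (Real.sqrt (ql 0) * (ql 1 / ql 0) + Real.sqrt (qr 0) * (qr 1 / qr 0)) /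
      (Real.sqrt (ql 0) + Real.sqrt (qr 0)))
    (hvt : vt = (Real.sqrt (ql 0) * (ql 2 / ql 0) + Real.sqrt (qr 0) * (qr 2 / qr 0)) /
      (Real.sqrt (ql 0) + Real.sqrt (qr 0)))
    (hHt : Ht = (Real.sqrt (ql 0) * ((ql 3 + pres γ ql) / ql 0) +
      Real.sqrt (qr 0) * ((qr 3 + pres γ qr) / qr 0)) /
      (Real.sqrt (ql 0) + Real.sqrt (qr 0)))
    (hpos : 0 < Ht - (ut ^ 2 + vt ^ 2) / 2)
    -- the jump lies in the span of the linear-wave eigenvectors r̃₂, r̃₃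
    (hspan : qr - ql ∈ Submodule.span ℝ
      ({![1, ut, vt, (ut ^ 2 + vt ^ 2) / 2], ![0, 0, 1, vt]} : Set (Fin 4 → ℝ))) :
    flux γ qr - flux γ ql = ut • (qr - ql) :=
  stmt8_general γ ql qr hρl hρr ut vt hut hvt hspan
end
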